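/- Let m > 0 and T > 0, and let P^+_{m,T} be the maximum value of the unique 2T-periodic solution of the switched system F(m,T). Set A = √(1 + m²) and B = tanh(T·A). Then tanh(P^+_{m,T}/2) = (A − √(A² − B²))/B. Equivalently, P^+_{m,T} = 2·artanh((A − √(A² − B²))/B), and the minimum value of the periodic solution is P^−_{m,T} = −P^+_{m,T}. -/

import Mathlib

open Real Filter Set

/-- The `2T`-periodic square wave: `+1` on `[0,T)`, `-1` on `[T,2T)`. -/
noncomputable def squareWave (T t : ℝ) : ℝ :=
  if Int.fract (t / (2 * T)) < 1 / 2 then 1 else -1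

/-- A solution of the switched system `F(m,T)`: a continuous function satisfying
`dV/dt = 2(u(t) - m sinh V)` away from the switching times `nT`, `n ∈ ℤ`. -/
def IsSolF (m T : ℝ) (V : ℝ → ℝ) : Prop :=
  Continuous V ∧ ∀ t : ℝ, (∀ n : ℤ, t ≠ n * T) →
    HasDerivAt V (2 * (squareWave T t - m * Real.sinh (V t))) t

/-- The inverse hyperbolic tangent. -/
noncomputable def artanh (x : ℝ) : ℝ := Real.log ((1 + x) / (1 - x)) / 2

/-!
Writing `w = tanh (V / 2)`, the equation on a half period where `u = 1` becomes the Riccati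
equation `w' = 1 - w² - 2 m w`, which is solved explicitly; the solution through `-w₁` at time
`0` is at `w₁` at time `T` exactly when `B (1 + w₁²) = 2 A w₁`, whose root in `(0, 1)` is
`w₁ = (A - √(A² - B²)) / B`. Call `f = 2 artanh w` this branch; `t ↦ -f (t - T)` solves the
equation where `u = -1`. Since `sinh` is increasing, the squared distance between two solutions
of the same equation is nonincreasing. Comparing `P` with `f` on `[0, T]` and with the reflected
branch on `[T, 2T]`, periodicity closes the chain of inequalities, so both distances are
constant, hence zero. Thus `P` ranges over `[-2 artanh w₁, 2 artanh w₁]`.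
-/

namespace Real

theorem hasDerivAt_artanh {x : ℝ} (hx : x ∈ Ioo (-1) 1) :
    HasDerivAt artanh (1 - x ^ 2)⁻¹ x := by
  obtain ⟨h₁, h₂⟩ := hx
  have hq₀ : 0 < (1 + x) / (1 - x) := div_pos (by linarith) (by linarith)
  have hq : HasDerivAt (fun y => (1 + y) / (1 - y)) (2 / (1 - x) ^ 2) x := by
    refine (((hasDerivAt_id x).const_add 1).div ((hasDerivAt_id x).const_sub 1)
      (by simp; linarith)).congr_deriv ?_
    simp only [id]
    ring
  refine ((hq.sqrt hq₀.ne').log (sqrt_pos.2 hq₀).ne').congr_deriv ?_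
  have h₄ : (1 : ℝ) + x ≠ 0 := by linarith
  have h₅ : 1 - x ^ 2 ≠ 0 := by nlinarith
  rw [div_div, mul_assoc, mul_self_sqrt hq₀.le]
  field_simp
  ring

theorem sinh_two_mul_artanh {x : ℝ} (hx : x ∈ Ioo (-1) 1) :
    sinh (2 * artanh x) = 2 * x / (1 - x ^ 2) := by
  have h : 0 < 1 - x ^ 2 := by nlinarith [hx.1, hx.2]
  rw [sinh_two_mul, sinh_artanh hx, cosh_artanh hx, mul_assoc, div_mul_div_comm, mul_one,
    mul_self_sqrt h.le, mul_div_assoc]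

theorem exp_two_mul_eq_one_add_tanh_div (x : ℝ) : exp (2 * x) = (1 + tanh x) / (1 - tanh x) := by
  have hc := cosh_pos x
  rw [tanh_eq_sinh_div_cosh, one_add_div hc.ne', one_sub_div hc.ne',
    div_div_div_cancel_right₀ hc.ne', cosh_add_sinh, cosh_sub_sinh, ← exp_sub, sub_neg_eq_add,
    two_mul]

theorem artanh_neg_eq_neg_artanh {x : ℝ} (hx : x ∈ Ioo (-1) 1) : artanh (-x) = -artanh x := by
  conv_lhs => rw [← tanh_artanh hx, ← tanh_neg, artanh_tanh]

theorem tanh_pos {x : ℝ} (hx : 0 < x) : 0 < tanh x := by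
  rw [tanh_eq_sinh_div_cosh]
  exact div_pos (sinh_pos_iff.2 hx) (cosh_pos x)

end Real

theorem artanh_eq_real_artanh {x : ℝ} (hx : x ∈ Icc (-1) 1) :
    _root_.artanh x = Real.artanh x := by
  rw [Real.artanh_eq_half_log hx, _root_.artanh]
  ring

theorem hasDerivAt_two_mul_artanh {m t : ℝ} {w : ℝ → ℝ}
    (hw : HasDerivAt w (1 - w t ^ 2 - 2 * m * w t) t) (ht : w t ∈ Ioo (-1) 1) :
    HasDerivAt (fun s => 2 * Real.artanh (w s)) (2 * (1 - m * sinh (2 * Real.artanh (w t)))) t := by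
  have h : 1 - w t ^ 2 ≠ 0 := by nlinarith [ht.1, ht.2]
  refine (((Real.hasDerivAt_artanh ht).comp t hw).const_mul 2).congr_deriv ?_
  rw [Real.sinh_two_mul_artanh ht]
  field_simp

-- For `A ^ 2 = 1 + m ^ 2`, the solution of `w' = 1 - w ^ 2 - 2 m w` with `w 0 = w₀`;
-- the equilibria of this Riccati equation are `A - m` and `-(A + m)`.
noncomputable def riccatiSol (A m w₀ t : ℝ) : ℝ :=
  A - m - 2 * A / ((A + m + w₀) / (A - m - w₀) * exp (2 * A * t) + 1)

section Riccati

variable {A m w₀ : ℝ}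

theorem riccatiSol_zero (hw₀ : w₀ ∈ Ioo (-(A + m)) (A - m)) :
    riccatiSol A m w₀ 0 = w₀ := by
  obtain ⟨h₁, h₂⟩ := hw₀
  have hd : A - m - w₀ ≠ 0 := by linarith
  have hA : 2 * A ≠ 0 := by linarith
  rw [riccatiSol, mul_zero, exp_zero, mul_one, div_add_one hd,
    show A + m + w₀ + (A - m - w₀) = 2 * A by ring, div_div_cancel₀ hA]
  ring

theorem riccatiSol_monotone (hw₀ : w₀ ∈ Ioo (-(A + m)) (A - m)) :
    Monotone (riccatiSol A m w₀) := by
  obtain ⟨h₁, h₂⟩ := hw₀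
  have hA : 0 < A := by linarith
  have hE₀ : 0 < (A + m + w₀) / (A - m - w₀) := div_pos (by linarith) (by linarith)
  intro s t hst
  unfold riccatiSol
  gcongr

theorem hasDerivAt_riccatiSol (hA : A ^ 2 = 1 + m ^ 2) (hw₀ : w₀ ∈ Ioo (-(A + m)) (A - m))
    (t : ℝ) : HasDerivAt (riccatiSol A m w₀)
      (1 - riccatiSol A m w₀ t ^ 2 - 2 * m * riccatiSol A m w₀ t) t := by
  obtain ⟨h₁, h₂⟩ := hw₀
  set E₀ := (A + m + w₀) / (A - m - w₀)
  have hfun : riccatiSol A m w₀ = fun s => A - m - 2 * A / (E₀ * exp (2 * A * s) + 1) := rfl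
  have hE₀ : 0 < E₀ := div_pos (by linarith) (by linarith)
  clear_value E₀
  rw [hfun]
  have hden : 0 < E₀ * exp (2 * A * t) + 1 := by positivity
  have hE : HasDerivAt (fun s => E₀ * exp (2 * A * s) + 1)
      (E₀ * (exp (2 * A * t) * (2 * A))) t :=
    ((((hasDerivAt_id t).const_mul (2 * A)).exp).const_mul E₀).add_const 1 |>.congr_deriv
      (by simp)
  refine (((hasDerivAt_const t (2 * A)).div hE hden.ne').const_sub (A - m)).congr_deriv ?_
  field_simp
  linear_combination (E₀ * exp (2 * A * t) + 1) ^ 2 * hA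

theorem riccatiSol_neg_eq_of_root {B T w : ℝ} (hA : A ^ 2 = 1 + m ^ 2)
    (hw : -w ∈ Ioo (-(A + m)) (A - m)) (hB : B < 1)
    (hexp : exp (2 * A * T) = (1 + B) / (1 - B)) (hroot : B * (1 + w ^ 2) = 2 * A * w) :
    riccatiSol A m (-w) T = w := by
  obtain ⟨h₁, h₂⟩ := hw
  have hB' : 1 - B ≠ 0 := by linarith
  have hden : 0 < (A + m + -w) / (A - m - -w) * exp (2 * A * T) + 1 := by
    have : 0 < (A + m + -w) / (A - m - -w) := div_pos (by linarith) (by linarith)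
    positivity
  rw [riccatiSol, sub_eq_iff_eq_add, ← sub_eq_iff_eq_add', eq_div_iff hden.ne', hexp]
  field_simp
  linear_combination 2 * hroot + 2 * B * hA

end Riccati

noncomputable def smallRoot (A B : ℝ) : ℝ := (A - √(A ^ 2 - B ^ 2)) / B

section SmallRoot

variable {A B : ℝ}

theorem smallRoot_eq (hB : 0 < B) (hBA : B ≤ A) :
    smallRoot A B = B / (A + √(A ^ 2 - B ^ 2)) := by
  have hD : √(A ^ 2 - B ^ 2) ^ 2 = A ^ 2 - B ^ 2 := sq_sqrt (by nlinarith)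
  have : 0 < A + √(A ^ 2 - B ^ 2) := add_pos_of_pos_of_nonneg (hB.trans_le hBA) (sqrt_nonneg _)
  rw [smallRoot, div_eq_div_iff hB.ne' this.ne']
  linear_combination -hD

theorem mul_one_add_smallRoot_sq (hB : 0 < B) (hBA : B ≤ A) :
    B * (1 + smallRoot A B ^ 2) = 2 * A * smallRoot A B := by
  have hD : √(A ^ 2 - B ^ 2) ^ 2 = A ^ 2 - B ^ 2 := sq_sqrt (by nlinarith)
  have : 0 < A + √(A ^ 2 - B ^ 2) := add_pos_of_pos_of_nonneg (hB.trans_le hBA) (sqrt_nonneg _)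
  rw [smallRoot_eq hB hBA]
  field_simp
  linear_combination hD

theorem smallRoot_mem_Ioo (hB : 0 < B) (hB1 : B < 1) (hA : 1 ≤ A) :
    smallRoot A B ∈ Ioo 0 1 := by
  have : 0 < A + √(A ^ 2 - B ^ 2) := add_pos_of_pos_of_nonneg (by linarith) (sqrt_nonneg _)
  rw [smallRoot_eq hB (by linarith)]
  exact ⟨div_pos hB this, (div_lt_one this).2 (by linarith [sqrt_nonneg (A ^ 2 - B ^ 2)])⟩

end SmallRoot

section Comparison

variable {m c a b : ℝ} {V W : ℝ → ℝ}

theorem sub_mul_sinh_sub_pos {x y : ℝ} (h : x ≠ y) : 0 < (x - y) * (sinh x - sinh y) := by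
  rcases h.lt_or_gt with h | h
  · exact mul_pos_of_neg_of_neg (sub_neg.2 h) (sub_neg.2 (sinh_lt_sinh.2 h))
  · exact mul_pos (sub_pos.2 h) (sub_pos.2 (sinh_lt_sinh.2 h))

theorem sub_mul_sinh_sub_nonneg (x y : ℝ) : 0 ≤ (x - y) * (sinh x - sinh y) := by
  rcases eq_or_ne x y with rfl | h
  · simp
  · exact (sub_mul_sinh_sub_pos h).le

theorem hasDerivAt_sq_sub {t : ℝ} (hV : HasDerivAt V (2 * (c - m * sinh (V t))) t)
    (hW : HasDerivAt W (2 * (c - m * sinh (W t))) t) :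
    HasDerivAt (fun s => (V s - W s) ^ 2)
      (-(4 * m) * ((V t - W t) * (sinh (V t) - sinh (W t)))) t := by
  refine ((hV.sub hW).pow 2).congr_deriv ?_
  simp only [Pi.sub_apply]
  ring

variable (hV : ContinuousOn V (Icc a b)) (hW : ContinuousOn W (Icc a b))
  (hV' : ∀ t ∈ Ioo a b, HasDerivAt V (2 * (c - m * sinh (V t))) t)
  (hW' : ∀ t ∈ Ioo a b, HasDerivAt W (2 * (c - m * sinh (W t))) t)
include hV hW hV' hW'

theorem antitoneOn_sq_sub (hm : 0 ≤ m) : AntitoneOn (fun t => (V t - W t) ^ 2) (Icc a b) := by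
  refine antitoneOn_of_hasDerivWithinAt_nonpos
    (f' := fun t => -(4 * m) * ((V t - W t) * (sinh (V t) - sinh (W t))))
    (convex_Icc a b) ((hV.sub hW).pow 2)
    (fun t ht => ?_) (fun t _ => ?_)
  · rw [interior_Icc] at ht ⊢
    exact (hasDerivAt_sq_sub (hV' t ht) (hW' t ht)).hasDerivWithinAt
  · exact mul_nonpos_of_nonpos_of_nonneg (by linarith) (sub_mul_sinh_sub_nonneg _ _)

theorem eqOn_of_sq_sub_le (hm : 0 < m) (hab : a < b)
    (hle : (V a - W a) ^ 2 ≤ (V b - W b) ^ 2) : EqOn V W (Icc a b) := by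
  set g := fun t => (V t - W t) ^ 2 with hg
  have hanti := antitoneOn_sq_sub hV hW hV' hW' hm.le
  have hconst : ∀ t ∈ Icc a b, g t = g a := fun t ht =>
    le_antisymm (hanti (left_mem_Icc.2 hab.le) ht ht.1)
      (hle.trans (hanti ht (right_mem_Icc.2 hab.le) ht.2))
  -- `g` is constant, so `g' = 0` at the midpoint, and as `sinh` is injective this forces `V = W`
  have hmid : (a + b) / 2 ∈ Ioo a b := ⟨by linarith, by linarith⟩
  have hVW : V ((a + b) / 2) = W ((a + b) / 2) := by
    by_contra hne
    have hzero : HasDerivAt g 0 ((a + b) / 2) :=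
      (hasDerivAt_const _ (g a)).congr_of_eventuallyEq <|
        Filter.eventually_of_mem (Ioo_mem_nhds hmid.1 hmid.2) fun t ht =>
          hconst t (Ioo_subset_Icc_self ht)
    have h := (hasDerivAt_sq_sub (hV' _ hmid) (hW' _ hmid)).unique hzero
    nlinarith [sub_mul_sinh_sub_pos hne]
  intro t ht
  have hgt : g t = 0 := by
    rw [hconst t ht, ← hconst _ (Ioo_subset_Icc_self hmid), hg]
    simp [hVW]
  exact sub_eq_zero.1 (pow_eq_zero_iff two_ne_zero |>.1 hgt)

end Comparison

section PeriodicOrbit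

variable {m T t : ℝ} {P : ℝ → ℝ}

theorem squareWave_of_mem_Ico (hT : 0 < T) (ht : t ∈ Ico 0 T) : squareWave T t = 1 := by
  have h2T : 0 < 2 * T := by linarith
  rw [squareWave, if_pos]
  rw [Int.fract_eq_self.2 ⟨div_nonneg ht.1 h2T.le, (div_lt_one h2T).2 (by linarith [ht.2])⟩,
    div_lt_iff₀ h2T]
  linarith [ht.2]

theorem squareWave_of_mem_Ico_T (hT : 0 < T) (ht : t ∈ Ico T (2 * T)) : squareWave T t = -1 := by
  have h2T : 0 < 2 * T := by linarith
  rw [squareWave, if_neg]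
  rw [Int.fract_eq_self.2 ⟨div_nonneg (by linarith [ht.1]) h2T.le, (div_lt_one h2T).2 ht.2⟩,
    not_lt, le_div_iff₀ h2T]
  linarith [ht.1]

theorem ne_intCast_mul_of_mem_Ioo (hT : 0 < T) {k : ℤ} (ht : t ∈ Ioo (k * T) ((k + 1) * T))
    (n : ℤ) : t ≠ n * T := by
  rintro rfl
  have h₁ : (k : ℝ) < n := lt_of_mul_lt_mul_right ht.1 hT.le
  have h₂ : (n : ℝ) < k + 1 := lt_of_mul_lt_mul_right ht.2 hT.le
  norm_cast at h₁ h₂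
  omega

theorem IsSolF.hasDerivAt_of_mem_Ioo_zero (hP : IsSolF m T P) (hT : 0 < T) (ht : t ∈ Ioo 0 T) :
    HasDerivAt P (2 * (1 - m * sinh (P t))) t := by
  rw [← squareWave_of_mem_Ico hT (Ioo_subset_Ico_self ht)]
  exact hP.2 t (ne_intCast_mul_of_mem_Ioo (k := 0) hT (by simpa using ht))

theorem IsSolF.hasDerivAt_of_mem_Ioo_T (hP : IsSolF m T P) (hT : 0 < T)
    (ht : t ∈ Ioo T (2 * T)) : HasDerivAt P (2 * (-1 - m * sinh (P t))) t := by
  rw [← squareWave_of_mem_Ico_T hT (Ioo_subset_Ico_self ht)]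
  refine hP.2 t (ne_intCast_mul_of_mem_Ioo (k := 1) hT ?_)
  norm_num
  exact ⟨ht.1, by linarith [ht.2]⟩

theorem IsSolF.eqOn_of_periodic (hm : 0 < m) (hT : 0 < T) (hP : IsSolF m T P)
    (hPper : Function.Periodic P (2 * T)) {f : ℝ → ℝ} (hf : ContinuousOn f (Icc 0 T))
    (hf' : ∀ t ∈ Ioo 0 T, HasDerivAt f (2 * (1 - m * sinh (f t))) t) (hf0 : f 0 = -f T) :
    EqOn P f (Icc 0 T) ∧ EqOn P (fun t => -f (t - T)) (Icc T (2 * T)) := by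
  set g := fun t => -f (t - T)
  have hg : ContinuousOn g (Icc T (2 * T)) :=
    (hf.comp (continuous_sub_right T).continuousOn fun t ht =>
      ⟨by linarith [ht.1], by linarith [ht.2]⟩).neg
  have hg' : ∀ t ∈ Ioo T (2 * T), HasDerivAt g (2 * (-1 - m * sinh (g t))) t := fun t ht =>
    ((hf' (t - T) ⟨by linarith [ht.1], by linarith [ht.2]⟩).comp_sub_const t T).neg.congr_deriv
      (by simp only [g, sinh_neg]; ring)
  have hP₁ : ∀ t ∈ Ioo 0 T, _ := fun t ht => hP.hasDerivAt_of_mem_Ioo_zero hT ht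
  have hP₂ : ∀ t ∈ Ioo T (2 * T), _ := fun t ht => hP.hasDerivAt_of_mem_Ioo_T hT ht
  have hgT : g T = f T := by simp [g, hf0]
  have hg2T : P (2 * T) - g (2 * T) = P 0 - f 0 := by
    simp only [g, hf0, show 2 * T - T = T by ring]
    rw [← zero_add (2 * T), hPper 0]
  have h₁ : (P T - f T) ^ 2 ≤ (P 0 - f 0) ^ 2 :=
    antitoneOn_sq_sub hP.1.continuousOn hf hP₁ hf' hm.le (left_mem_Icc.2 hT.le)
      (right_mem_Icc.2 hT.le) hT.le
  have h₂ : (P 0 - f 0) ^ 2 ≤ (P T - f T) ^ 2 := by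
    simpa only [hgT, hg2T] using antitoneOn_sq_sub hP.1.continuousOn hg hP₂ hg' hm.le
      (left_mem_Icc.2 (by linarith)) (right_mem_Icc.2 (by linarith)) (by linarith)
  exact ⟨eqOn_of_sq_sub_le hP.1.continuousOn hf hP₁ hf' hm hT h₂,
    eqOn_of_sq_sub_le hP.1.continuousOn hg hP₂ hg' hm (by linarith) (by rwa [hgT, hg2T])⟩

theorem smallRoot_sqrt_tanh_mem_Ioo (hm : 0 < m) (hT : 0 < T) :
    smallRoot √(1 + m ^ 2) (tanh (T * √(1 + m ^ 2))) ∈ Ioo 0 1 :=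
  smallRoot_mem_Ioo (Real.tanh_pos (by positivity)) (tanh_lt_one _)
    (one_le_sqrt.2 (le_add_of_nonneg_right (sq_nonneg m)))

theorem exists_upBranch (hm : 0 < m) (hT : 0 < T) :
    ∃ f : ℝ → ℝ, ContinuousOn f (Icc 0 T) ∧
      (∀ t ∈ Ioo 0 T, HasDerivAt f (2 * (1 - m * sinh (f t))) t) ∧ MonotoneOn f (Icc 0 T) ∧
      f 0 = -f T ∧
      f T = 2 * Real.artanh (smallRoot √(1 + m ^ 2) (tanh (T * √(1 + m ^ 2)))) := by
  set A := √(1 + m ^ 2)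
  set w₁ := smallRoot A (tanh (T * A))
  have hA : A ^ 2 = 1 + m ^ 2 := sq_sqrt (by positivity)
  have hmA : m < A := (lt_sqrt hm.le).2 (by linarith)
  have hA1 : 1 ≤ A := one_le_sqrt.2 (le_add_of_nonneg_right (sq_nonneg m))
  obtain ⟨hw₁, hw₁'⟩ : w₁ ∈ Ioo 0 1 := smallRoot_sqrt_tanh_mem_Ioo hm hT
  have hw₀ : -w₁ ∈ Ioo (-(A + m)) (A - m) := ⟨by linarith, by linarith⟩
  set w := riccatiSol A m (-w₁)
  have hw0 : w 0 = -w₁ := riccatiSol_zero hw₀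
  have hwT : w T = w₁ := riccatiSol_neg_eq_of_root hA hw₀ (tanh_lt_one _)
    (by rw [mul_assoc, mul_comm A]; exact Real.exp_two_mul_eq_one_add_tanh_div _)
    (mul_one_add_smallRoot_sq (Real.tanh_pos (by positivity)) ((tanh_lt_one _).le.trans hA1))
  have hwI : ∀ t ∈ Icc 0 T, w t ∈ Ioo (-1) 1 := fun t ht =>
    ⟨by linarith [riccatiSol_monotone hw₀ ht.1], by linarith [riccatiSol_monotone hw₀ ht.2]⟩
  have hderiv : ∀ t ∈ Icc 0 T, HasDerivAt (fun s => 2 * Real.artanh (w s))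
      (2 * (1 - m * sinh (2 * Real.artanh (w t)))) t := fun t ht =>
    hasDerivAt_two_mul_artanh (hasDerivAt_riccatiSol hA hw₀ t) (hwI t ht)
  refine ⟨fun s => 2 * Real.artanh (w s),
    fun t ht => (hderiv t ht).continuousAt.continuousWithinAt,
    fun t ht => hderiv t (Ioo_subset_Icc_self ht), fun s hs t ht hst => ?_, ?_,
    by simp only [hwT]⟩
  · have := Real.artanh_le_artanh (hwI s hs).1 (hwI t ht).2 (riccatiSol_monotone hw₀ hst)
    linarith
  · simp only [hw0, hwT, Real.artanh_neg_eq_neg_artanh ⟨by linarith, hw₁'⟩, mul_neg]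

theorem IsSolF.isGreatest_isLeast_range (hm : 0 < m) (hT : 0 < T) (hP : IsSolF m T P)
    (hPper : Function.Periodic P (2 * T)) {f : ℝ → ℝ} (hf : ContinuousOn f (Icc 0 T))
    (hf' : ∀ t ∈ Ioo 0 T, HasDerivAt f (2 * (1 - m * sinh (f t))) t)
    (hmono : MonotoneOn f (Icc 0 T)) (hf0 : f 0 = -f T) :
    IsGreatest (range P) (f T) ∧ IsLeast (range P) (-f T) := by
  obtain ⟨hPf, hPg⟩ := hP.eqOn_of_periodic hm hT hPper hf hf' hf0
  have hbound : ∀ t ∈ Icc 0 T, f t ∈ Icc (-f T) (f T) := fun t ht =>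
    ⟨hf0 ▸ hmono (left_mem_Icc.2 hT.le) ht ht.1, hmono ht (right_mem_Icc.2 hT.le) ht.2⟩
  have hrange : ∀ x, P x ∈ Icc (-f T) (f T) := by
    intro x
    obtain ⟨y, ⟨hy₀, hy⟩, hxy⟩ := hPper.exists_mem_Ico₀ (by positivity) x
    rw [hxy]
    rcases le_total y T with h | h
    · rw [hPf ⟨hy₀, h⟩]
      exact hbound y ⟨hy₀, h⟩
    · have := hbound (y - T) ⟨by linarith, by linarith⟩
      rw [hPg ⟨h, hy.le⟩]
      exact ⟨neg_le_neg this.2, neg_le.2 this.1⟩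
  exact ⟨⟨⟨T, hPf (right_mem_Icc.2 hT.le)⟩, forall_mem_range.2 fun x => (hrange x).2⟩,
    ⟨⟨0, (hPf (left_mem_Icc.2 hT.le)).trans hf0⟩,
      forall_mem_range.2 fun x => (hrange x).1⟩⟩

end PeriodicOrbit

theorem statement2 (m T : ℝ) (hm : 0 < m) (hT : 0 < T)
    (P : ℝ → ℝ) (hP : IsSolF m T P) (hPper : Function.Periodic P (2 * T))
    (A B : ℝ) (hA : A = Real.sqrt (1 + m ^ 2)) (hB : B = Real.tanh (T * A)) :
    Real.tanh (sSup (Set.range P) / 2) = (A - Real.sqrt (A ^ 2 - B ^ 2)) / B ∧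
    sSup (Set.range P) = 2 * _root_.artanh ((A - Real.sqrt (A ^ 2 - B ^ 2)) / B) ∧
    sInf (Set.range P) = -sSup (Set.range P) := by
  subst hA hB
  obtain ⟨f, hf, hf', hmono, hf0, hfT⟩ := exists_upBranch hm hT
  obtain ⟨hmax, hmin⟩ := hP.isGreatest_isLeast_range hm hT hPper hf hf' hmono hf0
  obtain ⟨hw₁, hw₁'⟩ := smallRoot_sqrt_tanh_mem_Ioo hm hT
  change _ = smallRoot _ _ ∧ _ = 2 * _root_.artanh (smallRoot _ _) ∧ _
  rw [hmax.csSup_eq, hmin.csInf_eq, hfT, artanh_eq_real_artanh ⟨by linarith, hw₁'.le⟩,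
    mul_div_cancel_left₀ _ two_ne_zero, Real.tanh_artanh ⟨by linarith, hw₁'⟩]
  exact ⟨rfl, rfl, rfl⟩
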